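/- Let G be a pomonoid, C a symmetric monoidal category, and T a centralisable strong G-graded monad on C with terminal graded central cones (Z^z X, ι^z_X). For all z, z' ∈ Z(G) and every object X, the composite μ^{z,z'}_X ∘ T^z(ι^{z'}_X) ∘ ι^z_{Z^{z'}X} : Z^z Z^{z'} X → T^{z∗z'} X is a graded central cone of T at (z∗z', X); hence it factors uniquely through ι^{z∗z'}_X, yielding the graded multiplication μ^Z of the centre. -/

import Mathlib

open CategoryTheory MonoidalCategory

universe v u

variable (G : Type*) [Monoid G] [PartialOrder G] [MulLeftMono G] [MulRightMono G]
variable (C : Type u) [Category.{v} C]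

/-- A pomonoid-graded monad on a category `C`, graded by the pomonoid `G`
(a monoid with a partial order for which multiplication is monotone in both arguments). -/
structure GradedMonad where
  /-- the graded family of endofunctors -/
  T : G → C ⥤ C
  /-- the unit -/
  η : 𝟭 C ⟶ T 1
  /-- the graded multiplication; `(μ a b).app X : T^a (T^b X) ⟶ T^{a*b} X` -/
  μ : ∀ a b : G, T b ⋙ T a ⟶ T (a * b)
  /-- the order natural transformations `T^{a ≤ a'}` -/
  ord : ∀ {a a' : G}, a ≤ a' → (T a ⟶ T a')
  ord_refl : ∀ a : G, ord (le_refl a) = 𝟙 (T a)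
  ord_trans : ∀ {a a' a'' : G} (h : a ≤ a') (h' : a' ≤ a''), ord h ≫ ord h' = ord (h.trans h')
  left_unit : ∀ (a : G) (X : C),
    η.app ((T a).obj X) ≫ (μ 1 a).app X = eqToHom (by rw [one_mul]; rfl)
  right_unit : ∀ (a : G) (X : C),
    (T a).map (η.app X) ≫ (μ a 1).app X = eqToHom (by rw [mul_one]; rfl)
  assoc : ∀ (a b c : G) (X : C),
    (T a).map ((μ b c).app X) ≫ (μ a (b * c)).app X =
      (μ a b).app ((T c).obj X) ≫ (μ (a * b) c).app X ≫ eqToHom (by rw [mul_assoc])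
  μ_ord : ∀ {a a' b b' : G} (h : a ≤ a') (h' : b ≤ b') (X : C),
    (μ a b).app X ≫ (ord (mul_le_mul' h h')).app X =
      (T a).map ((ord h').app X) ≫ (ord h).app ((T b').obj X) ≫ (μ a' b').app X

variable [MonoidalCategory C]

/-- A strong pomonoid-graded monad: a graded monad with a graded strength. -/
structure StrongGradedMonad extends GradedMonad G C where
  /-- the graded strength -/
  τ : ∀ (a : G) (X Y : C), X ⊗ (T a).obj Y ⟶ (T a).obj (X ⊗ Y)
  τ_natural : ∀ (a : G) {X X' Y Y' : C} (f : X ⟶ X') (g : Y ⟶ Y'),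
    (f ⊗ₘ (T a).map g) ≫ τ a X' Y' = τ a X Y ≫ (T a).map (f ⊗ₘ g)
  τ_unitor : ∀ (a : G) (X : C),
    τ a (𝟙_ C) X ≫ (T a).map (λ_ X).hom = (λ_ ((T a).obj X)).hom
  τ_assoc : ∀ (a : G) (X Y Z : C),
    (α_ X Y ((T a).obj Z)).hom ≫ (𝟙 X ⊗ₘ τ a Y Z) ≫ τ a X (Y ⊗ Z) =
      τ a (X ⊗ Y) Z ≫ (T a).map (α_ X Y Z).hom
  τ_η : ∀ (X Y : C), (𝟙 X ⊗ₘ η.app Y) ≫ τ 1 X Y = η.app (X ⊗ Y)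
  τ_μ : ∀ (a b : G) (X Y : C),
    (𝟙 X ⊗ₘ (μ a b).app Y) ≫ τ (a * b) X Y =
      τ a X ((T b).obj Y) ≫ (T a).map (τ b X Y) ≫ (μ a b).app (X ⊗ Y)
  τ_ord : ∀ {a a' : G} (h : a ≤ a') (X Y : C),
    (𝟙 X ⊗ₘ (ord h).app Y) ≫ τ a' X Y = τ a X Y ≫ (ord h).app (X ⊗ Y)

variable {G C}

namespace StrongGradedMonad

variable [BraidedCategory C]

/-- The graded costrength `τ'^a_{X,Y} := T^a(γ) ∘ τ^a ∘ γ`. -/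
def costr (M : StrongGradedMonad G C) (a : G) (X Y : C) :
    (M.T a).obj X ⊗ Y ⟶ (M.T a).obj (X ⊗ Y) :=
  (β_ ((M.T a).obj X) Y).hom ≫ M.τ a Y X ≫ (M.T a).map (β_ Y X).hom

/-- A strong graded monad is commutative when the two double-strength maps agree
(for all gradations `a`, `b` for which `a * b = b * a`, so that the equation typechecks;
in particular if the grading pomonoid is commutative this is required for all pairs). -/
def IsCommutative (M : StrongGradedMonad G C) : Prop :=
  ∀ (a b : G) (h : a * b = b * a) (X Y : C),
    M.costr a X ((M.T b).obj Y) ≫ (M.T a).map (M.τ b X Y) ≫ (M.μ a b).app (X ⊗ Y) =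
      M.τ b ((M.T a).obj X) Y ≫ (M.T b).map (M.costr a X Y) ≫ (M.μ b a).app (X ⊗ Y) ≫
        eqToHom (by rw [h])

/-- A graded central cone of `M` at `(z, X)` (where `z` is central in `G`),
with apex `Z` and map `ι : Z ⟶ T^z X`. -/
def CentralCone (M : StrongGradedMonad G C) (z : G) (hz : ∀ b : G, z * b = b * z)
    (X Z : C) (ι : Z ⟶ (M.T z).obj X) : Prop :=
  ∀ (b : G) (Y : C),
    (ι ⊗ₘ 𝟙 ((M.T b).obj Y)) ≫ M.costr z X ((M.T b).obj Y) ≫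
        (M.T z).map (M.τ b X Y) ≫ (M.μ z b).app (X ⊗ Y) =
      (ι ⊗ₘ 𝟙 ((M.T b).obj Y)) ≫ M.τ b ((M.T z).obj X) Y ≫
        (M.T b).map (M.costr z X Y) ≫ (M.μ b z).app (X ⊗ Y) ≫ eqToHom (by rw [hz b])

/-- A terminal graded central cone at `(z, X)`: a graded central cone through which every
graded central cone at `(z, X)` factors uniquely. -/
def IsTerminalCentralCone (M : StrongGradedMonad G C) (z : G) (hz : ∀ b : G, z * b = b * z)
    (X Z : C) (ι : Z ⟶ (M.T z).obj X) : Prop :=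
  M.CentralCone z hz X Z ι ∧
    ∀ (W : C) (f : W ⟶ (M.T z).obj X), M.CentralCone z hz X W f →
      ∃! φ : W ⟶ Z, φ ≫ ι = f

/-- A strong graded monad is centralisable when it has a terminal graded central cone
at `(z, X)` for every central `z` and every object `X`. -/
def Centralisable (M : StrongGradedMonad G C) : Prop :=
  ∀ (z : G) (hz : ∀ b : G, z * b = b * z) (X : C),
    ∃ (Z : C) (ι : Z ⟶ (M.T z).obj X), M.IsTerminalCentralCone z hz X Z ι

end StrongGradedMonad

/-- Every element of the centre of a monoid commutes with every element. -/
def centerComm {G : Type*} [Monoid G] (z : Submonoid.center G) :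
    ∀ b : G, (z : G) * b = b * (z : G) :=
  fun b => (Submonoid.mem_center_iff.mp z.prop b).symm

/-!
A cone `ι : W ⟶ T^z X` is central when the two double strengths `dstr` (costrength first) and
`dstr'` (strength first) agree after precomposition with `ι ⊗ 𝟙`. For the composite
`f ≫ T^a g ≫ μ^{a,c}`, compatibility of the costrength with `μ` and associativity of `μ` move
`dstr (a * c) b` under `T^a`, where it becomes `dstr c b` precomposed with `g`; centrality of `g`
swaps it for `dstr' c b`. What remains is `dstr a b` precomposed with `f`, which centrality of `f`
swaps for `dstr' a b`, and associativity of `μ` identifies the result with `dstr' (a * c) b`.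
Terminality of `ι^{z * z'}` then provides the unique factorisation.
-/

namespace StrongGradedMonad

section Monoidal

variable (M : StrongGradedMonad G C)

theorem τ_naturality_left (a : G) {X X' : C} (f : X ⟶ X') (Y : C) :
    (f ⊗ₘ 𝟙 ((M.T a).obj Y)) ≫ M.τ a X' Y = M.τ a X Y ≫ (M.T a).map (f ⊗ₘ 𝟙 Y) := by
  simpa using M.τ_natural a f (𝟙 Y)

theorem eqToHom_comp_map {a a' : G} (h : a = a') {X Y : C} (f : X ⟶ Y) :
    eqToHom (congrArg (fun d => (M.T d).obj X) h) ≫ (M.T a').map f =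
      (M.T a).map f ≫ eqToHom (congrArg (fun d => (M.T d).obj Y) h) := by
  subst h; simp

theorem eqToHom_comp_μ_app_left {a a' : G} (h : a = a') (b : G) (X : C) :
    eqToHom (congrArg (fun d => (M.T d).obj ((M.T b).obj X)) h) ≫ (M.μ a' b).app X =
      (M.μ a b).app X ≫ eqToHom (congrArg (fun d => (M.T (d * b)).obj X) h) := by
  subst h; simp

theorem map_comp_eqToHom_comp_μ_app (a : G) {b b' : G} (h : b = b') {P Q : C}
    (u : P ⟶ (M.T b).obj Q) :
    (M.T a).map (u ≫ eqToHom (congrArg (fun d => (M.T d).obj Q) h)) ≫ (M.μ a b').app Q =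
      (M.T a).map u ≫ (M.μ a b).app Q ≫ eqToHom (congrArg (fun d => (M.T (a * d)).obj Q) h) := by
  subst h; simp

end Monoidal

section Braided

variable [BraidedCategory C] (M : StrongGradedMonad G C)

theorem costr_natural (a : G) {X X' Y Y' : C} (f : X ⟶ X') (g : Y ⟶ Y') :
    ((M.T a).map f ⊗ₘ g) ≫ M.costr a X' Y' = M.costr a X Y ≫ (M.T a).map (f ⊗ₘ g) := by
  simp only [costr]
  rw [BraidedCategory.braiding_naturality_assoc, reassoc_of% (M.τ_natural a g f)]
  simp only [Category.assoc, ← Functor.map_comp, BraidedCategory.braiding_naturality]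

def dstr (a b : G) (X Y : C) : (M.T a).obj X ⊗ (M.T b).obj Y ⟶ (M.T (a * b)).obj (X ⊗ Y) :=
  M.costr a X ((M.T b).obj Y) ≫ (M.T a).map (M.τ b X Y) ≫ (M.μ a b).app (X ⊗ Y)

def dstr' (a b : G) (X Y : C) : (M.T a).obj X ⊗ (M.T b).obj Y ⟶ (M.T (b * a)).obj (X ⊗ Y) :=
  M.τ b ((M.T a).obj X) Y ≫ (M.T b).map (M.costr a X Y) ≫ (M.μ b a).app (X ⊗ Y)

theorem centralCone_iff {z : G} (hz : ∀ b, z * b = b * z) {X W : C} (ι : W ⟶ (M.T z).obj X) :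
    M.CentralCone z hz X W ι ↔ ∀ b Y, (ι ⊗ₘ 𝟙 _) ≫ M.dstr z b X Y =
      ((ι ⊗ₘ 𝟙 _) ≫ M.dstr' z b X Y) ≫
        eqToHom (congrArg (fun d => (M.T d).obj (X ⊗ Y)) (hz b).symm) := by
  simp only [CentralCone, dstr, dstr', Category.assoc]

theorem tensor_id_comp_dstr' {c : G} {W X : C} (k : W ⟶ (M.T c).obj X) (b : G) (Y : C) :
    (k ⊗ₘ 𝟙 ((M.T b).obj Y)) ≫ M.dstr' c b X Y =
      M.τ b W Y ≫ (M.T b).map ((k ⊗ₘ 𝟙 Y) ≫ M.costr c X Y) ≫ (M.μ b c).app (X ⊗ Y) := by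
  rw [dstr', reassoc_of% (M.τ_naturality_left b k Y), Functor.map_comp_assoc]

theorem costr_comp_map_comp_μ_app (a b c : G) {W Y Z : C} (h : W ⊗ Y ⟶ (M.T c).obj Z) :
    M.costr a W ((M.T b).obj Y) ≫ (M.T a).map (M.τ b W Y ≫ (M.T b).map h ≫ (M.μ b c).app Z) ≫
        (M.μ a (b * c)).app Z =
      M.dstr a b W Y ≫ (M.T (a * b)).map h ≫ (M.μ (a * b) c).app Z ≫
        eqToHom (congrArg (fun d => (M.T d).obj Z) (mul_assoc a b c)) := by
  simp only [dstr, Category.assoc, Functor.map_comp, M.assoc]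
  rw [← (M.μ a b).naturality_assoc]
  rfl

theorem τ_comp_map_comp_μ_app (a b c : G) {W Y Z : C} (h : W ⊗ Y ⟶ (M.T c).obj Z) :
    M.τ b ((M.T a).obj W) Y ≫ (M.T b).map (M.costr a W Y ≫ (M.T a).map h ≫ (M.μ a c).app Z) ≫
        (M.μ b (a * c)).app Z =
      M.dstr' a b W Y ≫ (M.T (b * a)).map h ≫ (M.μ (b * a) c).app Z ≫
        eqToHom (congrArg (fun d => (M.T d).obj Z) (mul_assoc b a c)) := by
  simp only [dstr', Category.assoc, Functor.map_comp, M.assoc]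
  rw [← (M.μ b a).naturality_assoc]
  rfl

end Braided

section Symmetric

variable [SymmetricCategory C] (M : StrongGradedMonad G C)

theorem costr_mul (a b : G) (X Y : C) :
    ((M.μ a b).app X ⊗ₘ 𝟙 Y) ≫ M.costr (a * b) X Y =
      M.costr a ((M.T b).obj X) Y ≫ (M.T a).map (M.costr b X Y) ≫ (M.μ a b).app (X ⊗ Y) := by
  simp only [costr, Functor.map_comp, Category.assoc]
  rw [BraidedCategory.braiding_naturality_assoc, reassoc_of% (M.τ_μ a b Y X),
    ← (M.μ a b).naturality, ← Functor.map_comp_assoc, SymmetricCategory.symmetry,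
    CategoryTheory.Functor.map_id, Category.id_comp]
  rfl

theorem μ_app_tensor_id_comp_dstr (a c b : G) (X Y : C) :
    ((M.μ a c).app X ⊗ₘ 𝟙 ((M.T b).obj Y)) ≫ M.dstr (a * c) b X Y =
      M.costr a ((M.T c).obj X) ((M.T b).obj Y) ≫ (M.T a).map (M.dstr c b X Y) ≫
        (M.μ a (c * b)).app (X ⊗ Y) ≫
          eqToHom (congrArg (fun d => (M.T d).obj (X ⊗ Y)) (mul_assoc a c b).symm) := by
  simp only [dstr, reassoc_of% (M.costr_mul a c X _), Functor.map_comp, Category.assoc,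
    reassoc_of% (M.assoc a c b (X ⊗ Y))]
  rw [← (M.μ a c).naturality_assoc]
  simp

variable {M} in
theorem CentralCone.comp {a c : G} {ha : ∀ b, a * b = b * a} {hc : ∀ b, c * b = b * c}
    {X W₁ W₂ : C} {f : W₁ ⟶ (M.T a).obj W₂} {g : W₂ ⟶ (M.T c).obj X}
    (hf : M.CentralCone a ha W₂ W₁ f) (hg : M.CentralCone c hc X W₂ g) :
    M.CentralCone (a * c) (fun b => by rw [mul_assoc, hc b, ← mul_assoc, ha b, mul_assoc]) X W₁
      (f ≫ (M.T a).map g ≫ (M.μ a c).app X) := by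
  rw [centralCone_iff] at hf hg ⊢
  intro b Y
  have hcostr : ((f ≫ (M.T a).map g ≫ (M.μ a c).app X) ⊗ₘ 𝟙 Y) ≫ M.costr (a * c) X Y =
      (f ⊗ₘ 𝟙 Y) ≫ M.costr a W₂ Y ≫ (M.T a).map ((g ⊗ₘ 𝟙 Y) ≫ M.costr c X Y) ≫
        (M.μ a c).app (X ⊗ Y) := by
    simp only [comp_tensor_id, Category.assoc, M.costr_mul,
      reassoc_of% (M.costr_natural a g (𝟙 Y)), Functor.map_comp]
  rw [M.tensor_id_comp_dstr' _ b Y, hcostr]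
  simp only [comp_tensor_id, Category.assoc]
  -- centrality of `g`, used under `T^a`
  rw [M.μ_app_tensor_id_comp_dstr, reassoc_of% (M.costr_natural a g (𝟙 _)),
    ← Functor.map_comp_assoc, hg b Y,
    reassoc_of% (M.map_comp_eqToHom_comp_μ_app a (hc b).symm _), M.tensor_id_comp_dstr',
    reassoc_of% M.costr_comp_map_comp_μ_app]
  -- centrality of `f`
  rw [reassoc_of% (hf b Y), reassoc_of% (M.eqToHom_comp_map (ha b).symm _),
    reassoc_of% (M.eqToHom_comp_μ_app_left (ha b).symm c _)]
  rw [Functor.map_comp_assoc (M.T b) (f ⊗ₘ 𝟙 Y), ← reassoc_of% (M.τ_naturality_left b f Y),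
    reassoc_of% M.τ_comp_map_comp_μ_app]
  simp only [eqToHom_trans]

end Symmetric

end StrongGradedMonad

open StrongGradedMonad in
/-- For a centralisable strong graded monad with terminal graded central cones
`(Zc z X, ι z X)`, the composite `μ^{z,z'} ∘ T^z(ι^{z'}) ∘ ι^z : Z^z Z^{z'} X ⟶ T^{z*z'} X`
is a graded central cone at `(z*z', X)`, and hence factors uniquely through `ι^{z*z'}_X`,
yielding the graded multiplication of the centre. -/
theorem centre_mul
    {G : Type*} [Monoid G] [PartialOrder G] [MulLeftMono G] [MulRightMono G]
    {C : Type u} [Category.{v} C] [MonoidalCategory C] [SymmetricCategory C]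
    (M : StrongGradedMonad G C)
    (Zc : Submonoid.center G → C → C)
    (ι : ∀ (z : Submonoid.center G) (X : C), Zc z X ⟶ (M.T (z : G)).obj X)
    (hterm : ∀ (z : Submonoid.center G) (X : C),
      M.IsTerminalCentralCone (z : G) (centerComm z) X (Zc z X) (ι z X))
    (z z' : Submonoid.center G) (X : C) :
    M.CentralCone ((z : G) * (z' : G)) (centerComm (z * z')) X (Zc z (Zc z' X))
      (ι z (Zc z' X) ≫ (M.T (z : G)).map (ι z' X) ≫ (M.μ (z : G) (z' : G)).app X) ∧
    ∃! φ : Zc z (Zc z' X) ⟶ Zc (z * z') X,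
      φ ≫ ι (z * z') X =
        ι z (Zc z' X) ≫ (M.T (z : G)).map (ι z' X) ≫ (M.μ (z : G) (z' : G)).app X := by
  have hcone := (hterm z (Zc z' X)).1.comp (hterm z' X).1
  exact ⟨hcone, (hterm (z * z') X).2 _ _ hcone⟩
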